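/- arXiv:1809.03145 — 3 statements merged into one kernel-verified Lean document; each statement's English description precedes it below -/
import Mathlib

section
/- Let Z be a Student t-distributed random variable with k degrees of freedom. There exist constants c, C > 0 independent of k such that for all b ≥ 1/√k, c·(1+b²)^{-(k-1)/2}/(√k·b) ≤ P(|Z| ≥ √k·b) ≤ C·(1+b²)^{-(k-1)/2}/(√k·b). -/
/-!
Substituting `t = √k s`, the normalising constant cancels and
`P(|Z| ≥ √k b) = T(b) / T(0)` with `T(b) = studentTail k b = ∫_b^∞ (1 + s²)^{-(k+1)/2} ds`.
For the upper bound on `T(b)`, Cauchy–Schwarz `(1 + b s)² ≤ (1 + b²)(1 + s²)` dominates the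
integrand by a multiple of `(1 + b s)^{-(k+1)}`, whose tail is explicit. For the lower bound, the
integrand is decreasing and on the window `(b, b + δ]`, `δ = (1 + b²)/(k b)`, it loses at most a
factor `(1 + 4/k)^{-(k+1)/2} ≥ e⁻⁴` as long as `k b² ≥ 1`. The same two estimates near `0`
(the window `(0, 1/√k]`, and the upper bound at `1/√k` plus `T(0) - T(1/√k) ≤ 1/√k`) give
`T(0) ≍ 1/√k`.
-/

open MeasureTheory Real Set Filter Topology

lemma toReal_withDensity_ofReal_apply {α : Type*} [MeasurableSpace α] {μ : Measure α}
    {f : α → ℝ} {s : Set α} (hs : MeasurableSet s) (hf : ∀ x, 0 ≤ f x)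
    (hfm : AEStronglyMeasurable f (μ.restrict s)) :
    (μ.withDensity (fun x => ENNReal.ofReal (f x)) s).toReal = ∫ x in s, f x ∂μ := by
  rw [withDensity_apply _ hs, integral_eq_lintegral_of_nonneg_ae (.of_forall hf) hfm]

lemma setIntegral_le_abs_of_even {f : ℝ → ℝ} (hf : ∀ x, f (-x) = f x) {a : ℝ} (ha : 0 ≤ a) :
    ∫ x in {x | a ≤ |x|}, f x = 2 * ∫ x in Ioi a, f x := by
  have hind : {x | a ≤ |x|}.indicator f = fun x => (Ici a).indicator f |x| := by
    ext x
    rcases abs_choice x with h | h <;> simp [indicator, h, hf]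
  rw [← integral_indicator (measurableSet_le measurable_const measurable_abs), hind,
    integral_comp_abs, setIntegral_indicator measurableSet_Ici]
  congr 1
  refine setIntegral_congr_set ?_
  have h := (ae_eq_refl (Ioi (0 : ℝ))).inter (Ioi_ae_eq_Ici (μ := volume) (a := a)).symm
  rwa [Ioi_inter_Ioi, max_eq_right ha] at h

noncomputable def studentTail (ν b : ℝ) : ℝ := ∫ s in Ioi b, (1 + s ^ 2) ^ (-((ν + 1) / 2))

section StudentTail

variable {ν : ℝ}

lemma integrable_one_add_sq_rpow_neg (hν : 0 < ν) :
    Integrable fun s : ℝ => (1 + s ^ 2) ^ (-((ν + 1) / 2)) := by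
  have h := integrable_rpow_neg_one_add_norm_sq (E := ℝ) (μ := volume) (r := ν + 1)
    (by simpa using hν)
  simpa only [Real.norm_eq_abs, sq_abs, neg_div] using h

lemma one_add_sq_rpow_neg_antitoneOn (hν : 0 < ν) :
    AntitoneOn (fun s : ℝ => (1 + s ^ 2) ^ (-((ν + 1) / 2))) (Ici 0) := by
  intro s hs t _ hst
  exact rpow_le_rpow_of_nonpos (by positivity) (by gcongr) (by linarith)

lemma rpow_neg_half_sub_one {x : ℝ} (hx : 0 < x) (ν : ℝ) :
    x ^ (-((ν - 1) / 2)) = x * x ^ (-((ν + 1) / 2)) := by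
  rw [mul_comm, ← rpow_add_one hx.ne']
  ring_nf

lemma exp_neg_mul_le_one_add_rpow_neg {x p : ℝ} (hx : 0 ≤ x) (hp : 0 ≤ p) :
    exp (-(p * x)) ≤ (1 + x) ^ (-p) := by
  calc exp (-(p * x)) = exp x ^ (-p) := by rw [← exp_mul, mul_neg, mul_comm]
    _ ≤ (1 + x) ^ (-p) :=
      rpow_le_rpow_of_nonpos (by positivity) (by linarith [add_one_le_exp x]) (by linarith)

lemma hasDerivAt_one_add_mul_rpow_neg {b : ℝ} (hb : b ≠ 0) (hν : ν ≠ 0) {s : ℝ}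
    (hs : 0 < 1 + b * s) :
    HasDerivAt (fun x => -(1 + b * x) ^ (-ν) / (b * ν)) ((1 + b * s) ^ (-(ν + 1))) s := by
  have h := ((((hasDerivAt_id s).const_mul b).const_add 1).rpow_const
    (p := -ν) (Or.inl hs.ne')).neg.div_const (b * ν)
  refine h.congr_deriv ?_
  rw [id, show -ν - 1 = -(ν + 1) by ring]
  field_simp

lemma tendsto_one_add_mul_rpow_neg {b : ℝ} (hb : 0 < b) (hν : 0 < ν) :
    Tendsto (fun x => -(1 + b * x) ^ (-ν) / (b * ν)) atTop (𝓝 0) := by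
  have h := ((tendsto_rpow_neg_atTop hν).comp (tendsto_atTop_add_const_left _ 1
    (tendsto_id.const_mul_atTop hb))).neg.div_const (b * ν)
  simpa using h

lemma integrableOn_one_add_mul_rpow_neg {b c : ℝ} (hb : 0 < b) (hc : 0 ≤ c) (hν : 0 < ν) :
    IntegrableOn (fun s => (1 + b * s) ^ (-(ν + 1))) (Ioi c) :=
  integrableOn_Ioi_deriv_of_nonneg'
    (fun s hs => hasDerivAt_one_add_mul_rpow_neg hb.ne' hν.ne' (by have := hc.trans hs.out; positivity))
    (fun s hs => rpow_nonneg (by have := hc.trans hs.out.le; positivity) _)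
    (tendsto_one_add_mul_rpow_neg hb hν)

lemma integral_one_add_mul_rpow_neg {b c : ℝ} (hb : 0 < b) (hc : 0 ≤ c) (hν : 0 < ν) :
    ∫ s in Ioi c, (1 + b * s) ^ (-(ν + 1)) = (1 + b * c) ^ (-ν) / (b * ν) := by
  rw [integral_Ioi_of_hasDerivAt_of_nonneg'
    (fun s hs => hasDerivAt_one_add_mul_rpow_neg hb.ne' hν.ne' (by have := hc.trans hs.out; positivity))
    (fun s hs => rpow_nonneg (by have := hc.trans hs.out.le; positivity) _)
    (tendsto_one_add_mul_rpow_neg hb hν)]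
  ring

lemma studentTail_le (hν : 0 < ν) {b : ℝ} (hb : 0 < b) :
    studentTail ν b ≤ (1 + b ^ 2) ^ (-((ν - 1) / 2)) / (ν * b) := by
  have hcomp : ∀ s ∈ Ioi b, (1 + s ^ 2) ^ (-((ν + 1) / 2))
      ≤ (1 + b * s) ^ (-(ν + 1)) / (1 + b ^ 2) ^ (-((ν + 1) / 2)) := by
    intro s hs
    have hs0 : 0 < 1 + b * s := by have := hb.trans hs.out; positivity
    have hcs : (1 + b * s) ^ 2 / (1 + b ^ 2) ≤ 1 + s ^ 2 := by
      rw [div_le_iff₀ (by positivity)]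
      nlinarith [sq_nonneg (b - s)]
    calc (1 + s ^ 2) ^ (-((ν + 1) / 2))
        ≤ ((1 + b * s) ^ 2 / (1 + b ^ 2)) ^ (-((ν + 1) / 2)) :=
          rpow_le_rpow_of_nonpos (by positivity) hcs (by linarith)
      _ = (1 + b * s) ^ (-(ν + 1)) / (1 + b ^ 2) ^ (-((ν + 1) / 2)) := by
          rw [div_rpow (by positivity) (by positivity), ← rpow_natCast (1 + b * s),
            ← rpow_mul hs0.le]
          congr 2
          push_cast
          ring
  calc studentTail ν b
      ≤ ∫ s in Ioi b, (1 + b * s) ^ (-(ν + 1)) / (1 + b ^ 2) ^ (-((ν + 1) / 2)) :=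
        setIntegral_mono_on (integrable_one_add_sq_rpow_neg hν).integrableOn
          ((integrableOn_one_add_mul_rpow_neg hb hb.le hν).div_const _) measurableSet_Ioi hcomp
    _ = (1 + b ^ 2) ^ (-((ν - 1) / 2)) / (ν * b) := by
        have hsplit : (1 + b ^ 2) ^ (-ν)
            = (1 + b ^ 2) ^ (-((ν - 1) / 2)) * (1 + b ^ 2) ^ (-((ν + 1) / 2)) := by
          rw [← rpow_add (by positivity)]
          ring_nf
        rw [integral_div, integral_one_add_mul_rpow_neg hb hb.le hν, ← sq, hsplit]
        field_simp

lemma mul_rpow_le_studentTail (hν : 0 < ν) {a δ : ℝ} (ha : 0 ≤ a) (hδ : 0 ≤ δ) :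
    δ * (1 + (a + δ) ^ 2) ^ (-((ν + 1) / 2)) ≤ studentTail ν a := by
  have hint := (integrable_one_add_sq_rpow_neg hν).integrableOn (s := Ioi a)
  calc δ * (1 + (a + δ) ^ 2) ^ (-((ν + 1) / 2))
      ≤ ∫ s in Ioc a (a + δ), (1 + s ^ 2) ^ (-((ν + 1) / 2)) := by
        have hmin : ∀ s ∈ Ioc a (a + δ),
            (1 + (a + δ) ^ 2) ^ (-((ν + 1) / 2)) ≤ (1 + s ^ 2) ^ (-((ν + 1) / 2)) :=
          fun s hs => one_add_sq_rpow_neg_antitoneOn hν (ha.trans hs.1.le : 0 ≤ s)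
            (by positivity : (0 : ℝ) ≤ a + δ) hs.2
        have h := setIntegral_ge_of_const_le_real measurableSet_Ioc measure_Ioc_lt_top.ne hmin
          (hint.mono_set Ioc_subset_Ioi_self)
        rwa [Real.volume_real_Ioc_of_le (by linarith), add_sub_cancel_left, mul_comm] at h
    _ ≤ studentTail ν a :=
        setIntegral_mono_set hint (.of_forall fun s => by positivity)
          (.of_forall Ioc_subset_Ioi_self)

lemma exp_neg_four_mul_le_studentTail (hν : 1 ≤ ν) {b : ℝ} (hb : 0 < b) (hνb : 1 ≤ ν * b ^ 2) :
    exp (-4) * (1 + b ^ 2) ^ (-((ν - 1) / 2)) / (ν * b) ≤ studentTail ν b := by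
  have hν0 : 0 < ν := by linarith
  set δ := (1 + b ^ 2) / (ν * b) with hδ
  have hδb : ν * b * δ = 1 + b ^ 2 := by rw [hδ]; field_simp
  have hδ2 : δ ≤ 2 * b := by
    rw [hδ, div_le_iff₀ (by positivity)]
    nlinarith
  have hgrow : 1 + (b + δ) ^ 2 ≤ (1 + b ^ 2) * (1 + 4 / ν) := by
    have h : (b + δ) ^ 2 - b ^ 2 ≤ 4 * (1 + b ^ 2) / ν := by
      rw [le_div_iff₀ hν0]
      nlinarith [mul_le_mul_of_nonneg_left hδ2 (by positivity : 0 ≤ ν * δ)]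
    rw [mul_one_add, mul_div_assoc', mul_comm _ (4 : ℝ)]
    linarith
  have hexp : exp (-4) ≤ (1 + 4 / ν) ^ (-((ν + 1) / 2)) := by
    refine le_trans ?_ (exp_neg_mul_le_one_add_rpow_neg (by positivity) (by positivity))
    gcongr
    rw [div_mul_div_comm, div_le_iff₀ (by positivity)]
    linarith
  calc exp (-4) * (1 + b ^ 2) ^ (-((ν - 1) / 2)) / (ν * b)
      = δ * ((1 + b ^ 2) ^ (-((ν + 1) / 2)) * exp (-4)) := by
        rw [rpow_neg_half_sub_one (by positivity), hδ]
        ring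
    _ ≤ δ * ((1 + b ^ 2) ^ (-((ν + 1) / 2)) * (1 + 4 / ν) ^ (-((ν + 1) / 2))) :=
        mul_le_mul_of_nonneg_left (mul_le_mul_of_nonneg_left hexp (by positivity))
          (by positivity)
    _ = δ * ((1 + b ^ 2) * (1 + 4 / ν)) ^ (-((ν + 1) / 2)) := by
        rw [mul_rpow (by positivity) (by positivity)]
    _ ≤ δ * (1 + (b + δ) ^ 2) ^ (-((ν + 1) / 2)) :=
        mul_le_mul_of_nonneg_left (rpow_le_rpow_of_nonpos (by positivity) hgrow (by linarith))
          (by positivity)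
    _ ≤ studentTail ν b := mul_rpow_le_studentTail hν0 hb.le (by positivity)

lemma studentTail_zero_bounds (hν : 1 ≤ ν) :
    exp (-1) / √ν ≤ studentTail ν 0 ∧ studentTail ν 0 ≤ 2 / √ν := by
  have hν0 : 0 < ν := by linarith
  have hsq : (√ν)⁻¹ ^ 2 = ν⁻¹ := by rw [inv_pow, sq_sqrt hν0.le]
  constructor
  · calc exp (-1) / √ν ≤ (√ν)⁻¹ * (1 + (√ν)⁻¹ ^ 2) ^ (-((ν + 1) / 2)) := by
          rw [div_eq_inv_mul, hsq]
          gcongr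
          refine le_trans ?_ (exp_neg_mul_le_one_add_rpow_neg (by positivity) (by positivity))
          gcongr
          rw [← div_eq_mul_inv, div_le_iff₀ hν0]
          linarith
      _ ≤ studentTail ν 0 := by
          simpa using mul_rpow_le_studentTail hν0 le_rfl (inv_nonneg.2 (sqrt_nonneg ν))
  · have hint := integrable_one_add_sq_rpow_neg hν0
    have hhead : ∫ s in (0 : ℝ)..(√ν)⁻¹, (1 + s ^ 2) ^ (-((ν + 1) / 2)) ≤ (√ν)⁻¹ := by
      have h := intervalIntegral.norm_integral_le_of_norm_le_const (a := 0) (b := (√ν)⁻¹)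
        (C := 1) (f := fun s => (1 + s ^ 2) ^ (-((ν + 1) / 2))) fun s _ => by
          rw [norm_of_nonneg (by positivity)]
          exact rpow_le_one_of_one_le_of_nonpos (by nlinarith [sq_nonneg s]) (by linarith)
      rw [sub_zero, one_mul, abs_of_pos (by positivity)] at h
      exact (le_abs_self _).trans h
    have htail : studentTail ν (√ν)⁻¹ ≤ (√ν)⁻¹ := by
      have hνb : ν * (√ν)⁻¹ = √ν := by
        rw [← div_eq_mul_inv, div_eq_iff (by positivity), mul_self_sqrt hν0.le]
      refine (studentTail_le hν0 (by positivity)).trans ?_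
      rw [hνb, inv_eq_one_div]
      gcongr
      exact rpow_le_one_of_one_le_of_nonpos (by nlinarith) (by linarith)
    rw [studentTail, ← intervalIntegral.integral_interval_add_Ioi (b := (√ν)⁻¹)
      hint.integrableOn hint.integrableOn]
    calc _ ≤ (√ν)⁻¹ + (√ν)⁻¹ := add_le_add hhead htail
      _ = 2 / √ν := by ring

lemma studentTail_div_studentTail_zero_bounds (hν : 1 ≤ ν) {b : ℝ} (hb : 1 / √ν ≤ b) :
    exp (-4) / 2 * (1 + b ^ 2) ^ (-((ν - 1) / 2)) / (√ν * b) ≤ studentTail ν b / studentTail ν 0 ∧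
      studentTail ν b / studentTail ν 0 ≤ exp 1 * (1 + b ^ 2) ^ (-((ν - 1) / 2)) / (√ν * b) := by
  have hν0 : 0 < ν := by linarith
  have hr : 0 < √ν := sqrt_pos.2 hν0
  have hb0 : 0 < b := lt_of_lt_of_le (by positivity) hb
  have hνb : 1 ≤ ν * b ^ 2 := by
    rw [div_le_iff₀ hr] at hb
    nlinarith [mul_self_sqrt hν0.le]
  obtain ⟨hzero_lower, hzero_upper⟩ := studentTail_zero_bounds hν
  have htail_lower := exp_neg_four_mul_le_studentTail hν hb0 hνb
  have htail_upper := studentTail_le hν0 hb0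
  constructor
  · calc exp (-4) / 2 * (1 + b ^ 2) ^ (-((ν - 1) / 2)) / (√ν * b)
        = exp (-4) * (1 + b ^ 2) ^ (-((ν - 1) / 2)) / (ν * b) / (2 / √ν) := by
          field_simp
          rw [sq_sqrt hν0.le]
      _ ≤ studentTail ν b / studentTail ν 0 :=
          div_le_div₀ (le_trans (by positivity) htail_lower) htail_lower
            (lt_of_lt_of_le (by positivity) hzero_lower) hzero_upper
  · calc studentTail ν b / studentTail ν 0
        ≤ (1 + b ^ 2) ^ (-((ν - 1) / 2)) / (ν * b) / (exp (-1) / √ν) :=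
          div_le_div₀ (by positivity) htail_upper (by positivity) hzero_lower
      _ = exp 1 * (1 + b ^ 2) ^ (-((ν - 1) / 2)) / (√ν * b) := by
          rw [exp_neg]
          field_simp
          rw [sq_sqrt hν0.le]

lemma integral_Ioi_sqrt_mul_eq_studentTail (hν : 0 < ν) (b : ℝ) :
    ∫ t in Ioi (√ν * b), (1 + t ^ 2 / ν) ^ (-((ν + 1) / 2)) = √ν * studentTail ν b := by
  rw [← integral_comp_mul_left_Ioi' _ _ (sqrt_pos.2 hν), smul_eq_mul, studentTail]
  congr 1
  refine setIntegral_congr_fun measurableSet_Ioi fun s _ => ?_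
  rw [mul_pow, sq_sqrt hν.le, mul_div_cancel_left₀ _ hν.ne']

lemma toReal_withDensity_le_abs (hν : 0 < ν) {ck : ℝ} (hck : 0 ≤ ck) {b : ℝ} (hb : 0 ≤ b) :
    (volume.withDensity (fun t => ENNReal.ofReal (ck * (1 + t ^ 2 / ν) ^ (-((ν + 1) / 2))))
      {t | √ν * b ≤ |t|}).toReal = 2 * √ν * ck * studentTail ν b := by
  rw [toReal_withDensity_ofReal_apply (measurableSet_le measurable_const measurable_abs)
      (fun t => by positivity) (by fun_prop : Measurable _).aestronglyMeasurable,
    setIntegral_le_abs_of_even (fun t => by rw [neg_sq]) (by positivity),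
    integral_const_mul, integral_Ioi_sqrt_mul_eq_studentTail hν]
  ring

end StudentTail

/-- Tail bounds for the Student t distribution with `k` degrees of freedom,
with constants independent of `k`. The law of `Z` is encoded by its density
`ck * (1 + t^2/k)^(-(k+1)/2)` with normalizing constant `ck`. -/
theorem student_tail_bounds :
    ∃ c C : ℝ, 0 < c ∧ 0 < C ∧
      ∀ (k : ℕ), 1 ≤ k → ∀ ck : ℝ, 0 < ck →
        ∀ μ : Measure ℝ,
          μ = volume.withDensity
            (fun t => ENNReal.ofReal (ck * (1 + t ^ 2 / (k : ℝ)) ^ (-(((k : ℝ) + 1) / 2)))) →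
          IsProbabilityMeasure μ →
          ∀ b : ℝ, 1 / Real.sqrt k ≤ b →
            c * (1 + b ^ 2) ^ (-(((k : ℝ) - 1) / 2)) / (Real.sqrt k * b)
              ≤ (μ {t : ℝ | Real.sqrt k * b ≤ |t|}).toReal ∧
            (μ {t : ℝ | Real.sqrt k * b ≤ |t|}).toReal
              ≤ C * (1 + b ^ 2) ^ (-(((k : ℝ) - 1) / 2)) / (Real.sqrt k * b) := by
  refine ⟨exp (-4) / 2, exp 1, by positivity, by positivity, ?_⟩
  rintro k hk ck hck μ rfl hμ b hb
  have hν : (1 : ℝ) ≤ k := by exact_mod_cast hk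
  have hν0 : (0 : ℝ) < k := by linarith
  have hnorm := toReal_withDensity_le_abs hν0 hck.le le_rfl
  simp only [mul_zero, abs_nonneg, ofPred_true, measure_univ, ENNReal.toReal_one] at hnorm
  have hT0 : studentTail k 0 ≠ 0 :=
    (lt_of_lt_of_le (by positivity) (studentTail_zero_bounds hν).1).ne'
  have hratio : 2 * √k * ck * studentTail k b = studentTail k b / studentTail k 0 := by
    rw [eq_div_iff hT0]
    linear_combination -studentTail k b * hnorm
  rw [toReal_withDensity_le_abs hν0 hck.le (le_trans (by positivity) hb), hratio]
  exact studentTail_div_studentTail_zero_bounds hν hb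
end

section
/- For any N ≥ 1 and t > 0, if χ²(N) is a chi-squared random variable with N degrees of freedom, then P(|χ²(N)/N − 1| ≥ t) ≤ 2·exp(−t²·N/(4(1+t))). -/
open MeasureTheory ProbabilityTheory Real

/-! Chernoff's method. For a standard Gaussian `X` and `c < 1/2`, `𝔼 exp (c X²) = (1 - 2c)^(-1/2)`,
so by independence the cumulant generating function of `χ²(N)` is `-(N/2) log (1 - 2c)`.
Taking `c = t / (2(1+t))` for the upper tail and `c = -t/2` for the lower tail, the exponents are
controlled by `log (1+t) ≤ sinh (log (1+t)) = ((1+t) - (1+t)⁻¹)/2` and `2t/(t+2) ≤ log (1+t)`. -/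

namespace Real

lemma le_abs_div_sub_one_iff {s n t : ℝ} (hn : 0 < n) :
    t ≤ |s / n - 1| ↔ n * (1 + t) ≤ s ∨ s ≤ n * (1 - t) := by
  rw [le_abs, le_sub_iff_add_le, le_neg, sub_le_iff_le_add, le_div_iff₀ hn, div_le_iff₀ hn]
  exact or_congr (by rw [mul_comm, add_comm]) (by rw [mul_comm, sub_eq_add_neg, add_comm])

lemma log_le_half_sub_inv {x : ℝ} (hx : 1 ≤ x) : log x ≤ (x - x⁻¹) / 2 := by
  rw [← sinh_log (by positivity)]
  exact self_le_sinh_iff.mpr (log_nonneg hx)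

end Real

lemma integral_exp_mul_sq_gaussianReal {c : ℝ} (hc : c < 1 / 2) :
    ∫ x, exp (c * x ^ 2) ∂gaussianReal 0 1 = (√(1 - 2 * c))⁻¹ := by
  have hpdf : ∀ x, gaussianPDFReal 0 1 x • exp (c * x ^ 2)
      = (√(2 * π))⁻¹ * exp (-(1 / 2 - c) * x ^ 2) := fun x => by
    rw [gaussianPDFReal, smul_eq_mul, mul_assoc, ← exp_add]
    push_cast
    ring_nf
  simp_rw [integral_gaussianReal_eq_integral_smul one_ne_zero, hpdf, integral_const_mul,
    integral_gaussian, ← sqrt_inv]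
  rw [← sqrt_mul (by positivity)]
  congr 1
  have : 1 - 2 * c ≠ 0 := by linarith
  field_simp

lemma integrable_exp_mul_sq_gaussianReal {c : ℝ} (hc : c < 1 / 2) :
    Integrable (fun x => exp (c * x ^ 2)) (gaussianReal 0 1) :=
  Integrable.of_integral_ne_zero <| by
    rw [integral_exp_mul_sq_gaussianReal hc]
    exact inv_ne_zero (sqrt_ne_zero'.mpr (by linarith))

section StandardGaussian

variable {Ω : Type*} [MeasurableSpace Ω] {P : Measure Ω} {c : ℝ}

lemma mgf_sq_of_map_eq_gaussianReal {X : Ω → ℝ} (hX : P.map X = gaussianReal 0 1)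
    (hc : c < 1 / 2) : mgf (fun ω => X ω ^ 2) P c = exp (-log (1 - 2 * c) / 2) := by
  have hXm : AEMeasurable X P := .of_map_ne_zero (hX ▸ IsProbabilityMeasure.ne_zero _)
  rw [mgf, ← integral_map (f := fun x => exp (c * x ^ 2)) hXm (by fun_prop), hX,
    integral_exp_mul_sq_gaussianReal hc, neg_div, exp_neg, ← log_sqrt (by linarith),
    exp_log (sqrt_pos.mpr (by linarith))]

lemma mgf_sum_sq_of_iIndepFun {ι : Type*} [Fintype ι] {g : ι → Ω → ℝ} (hindep : iIndepFun g P)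
    (hg : ∀ i, P.map (g i) = gaussianReal 0 1) (hc : c < 1 / 2) :
    mgf (fun ω => ∑ i, g i ω ^ 2) P c = exp (-(Fintype.card ι * log (1 - 2 * c)) / 2) := by
  have hgm (i : ι) : AEMeasurable (g i) P := .of_map_ne_zero (hg i ▸ IsProbabilityMeasure.ne_zero _)
  have hsq : iIndepFun (fun i ω => g i ω ^ 2) P :=
    hindep.comp (fun _ x => x ^ 2) (fun _ => by fun_prop)
  have hsum := hsq.mgf_sum₀ (t := c) (fun i => (hgm i).pow_const 2) Finset.univ
  simp only [Finset.sum_fn] at hsum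
  rw [hsum, Finset.prod_congr rfl fun i _ => mgf_sq_of_map_eq_gaussianReal (hg i) hc,
    Finset.prod_const, Finset.card_univ, ← exp_nat_mul]
  congr 1
  ring

end StandardGaussian

section ChernoffChiSquared

variable {Ω : Type*} [MeasurableSpace Ω] {P : Measure Ω} {S : Ω → ℝ} {k t : ℝ}

lemma cgf_eq_of_mgf_eq (hS : ∀ c < 1 / 2, mgf S P c = exp (-(k * log (1 - 2 * c)) / 2))
    {c : ℝ} (hc : c < 1 / 2) : cgf S P c = -(k * log (1 - 2 * c)) / 2 := by
  rw [cgf, hS c hc, log_exp]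

lemma integrable_exp_mul_of_mgf_eq
    (hS : ∀ c < 1 / 2, mgf S P c = exp (-(k * log (1 - 2 * c)) / 2))
    {c : ℝ} (hc : c < 1 / 2) : Integrable (fun ω => exp (c * S ω)) P :=
  .of_integral_ne_zero <| by
    rw [← mgf, hS c hc]
    exact (exp_pos _).ne'

lemma measureReal_ge_le_of_mgf_eq [IsFiniteMeasure P]
    (hS : ∀ c < 1 / 2, mgf S P c = exp (-(k * log (1 - 2 * c)) / 2)) (hk : 0 ≤ k) (ht : 0 ≤ t) :
    P.real {ω | k * (1 + t) ≤ S ω} ≤ exp (-(t ^ 2 * k) / (4 * (1 + t))) := by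
  have ht1 : 0 < 1 + t := by linarith
  have hc : t / (2 * (1 + t)) < 1 / 2 := by rw [div_lt_iff₀ (by positivity)]; linarith
  refine (measure_ge_le_exp_cgf _ (by positivity) (integrable_exp_mul_of_mgf_eq hS hc)).trans ?_
  have h1c : 1 - 2 * (t / (2 * (1 + t))) = (1 + t)⁻¹ := by field_simp; ring
  rw [cgf_eq_of_mgf_eq hS hc, exp_le_exp, h1c, log_inv, mul_neg, neg_neg]
  have hlog := log_le_half_sub_inv (x := 1 + t) (by linarith)
  calc -(t / (2 * (1 + t))) * (k * (1 + t)) + k * log (1 + t) / 2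
      ≤ -(t / (2 * (1 + t))) * (k * (1 + t)) + k * ((1 + t - (1 + t)⁻¹) / 2) / 2 := by gcongr
    _ = -(t ^ 2 * k) / (4 * (1 + t)) := by field_simp; ring

lemma measureReal_le_le_of_mgf_eq [IsFiniteMeasure P]
    (hS : ∀ c < 1 / 2, mgf S P c = exp (-(k * log (1 - 2 * c)) / 2)) (hk : 0 ≤ k) (ht : 0 ≤ t) :
    P.real {ω | S ω ≤ k * (1 - t)} ≤ exp (-(t ^ 2 * k) / (4 * (1 + t))) := by
  have hc : -t / 2 < 1 / 2 := by linarith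
  refine (measure_le_le_exp_cgf _ (by linarith) (integrable_exp_mul_of_mgf_eq hS hc)).trans ?_
  rw [cgf_eq_of_mgf_eq hS hc, exp_le_exp, show 1 - 2 * (-t / 2) = 1 + t by ring]
  have hlog := le_log_one_add_of_nonneg ht
  calc -(-t / 2) * (k * (1 - t)) + -(k * log (1 + t)) / 2
      ≤ -(-t / 2) * (k * (1 - t)) + -(k * (2 * t / (t + 2))) / 2 := by gcongr
    _ ≤ -(t ^ 2 * k) / (4 * (1 + t)) := by
        rw [← sub_nonneg]
        have : 0 ≤ k * t ^ 3 * (2 * t + 3) := by positivity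
        field_simp
        nlinarith

end ChernoffChiSquared

theorem chi_squared_concentration_general
    {Ω : Type*} [MeasurableSpace Ω] (P : Measure Ω) [IsProbabilityMeasure P]
    (N : ℕ) (hN : 1 ≤ N) (g : Fin N → Ω → ℝ)
    (hindep : iIndepFun g P)
    (hgauss : ∀ i, Measure.map (g i) P = gaussianReal 0 1)
    (t : ℝ) (ht : 0 < t) :
    P {ω | t ≤ |(∑ i, (g i ω) ^ 2) / (N : ℝ) - 1|}
      ≤ ENNReal.ofReal (2 * Real.exp (-(t ^ 2 * (N : ℝ)) / (4 * (1 + t)))) := by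
  set S : Ω → ℝ := fun ω => ∑ i, g i ω ^ 2
  set bound := exp (-(t ^ 2 * (N : ℝ)) / (4 * (1 + t)))
  have hS (c : ℝ) (hc : c < 1 / 2) : mgf S P c = exp (-(N * log (1 - 2 * c)) / 2) := by
    simpa using mgf_sum_sq_of_iIndepFun hindep hgauss hc
  have hsplit :
      {ω | t ≤ |S ω / N - 1|} = {ω | N * (1 + t) ≤ S ω} ∪ {ω | S ω ≤ N * (1 - t)} := by
    ext ω
    exact le_abs_div_sub_one_iff (by exact_mod_cast hN)
  have hofReal {s : Set Ω} (h : P.real s ≤ bound) : P s ≤ ENNReal.ofReal bound :=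
    (ENNReal.le_ofReal_iff_toReal_le (measure_ne_top _ _) (exp_pos _).le).mpr h
  calc P {ω | t ≤ |S ω / N - 1|}
      ≤ P {ω | N * (1 + t) ≤ S ω} + P {ω | S ω ≤ N * (1 - t)} := hsplit ▸ measure_union_le _ _
    _ ≤ ENNReal.ofReal bound + ENNReal.ofReal bound :=
        add_le_add (hofReal (measureReal_ge_le_of_mgf_eq hS N.cast_nonneg ht.le))
          (hofReal (measureReal_le_le_of_mgf_eq hS N.cast_nonneg ht.le))
    _ = ENNReal.ofReal (2 * bound) := by
        rw [← ENNReal.ofReal_add (exp_pos _).le (exp_pos _).le, two_mul]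

/-- Concentration of a chi-squared random variable with `N` degrees of
freedom, written as the sum of squares of `N` i.i.d. standard Gaussians. -/
theorem chi_squared_concentration
    {Ω : Type*} [MeasurableSpace Ω] (P : Measure Ω) [IsProbabilityMeasure P]
    (N : ℕ) (hN : 1 ≤ N) (g : Fin N → Ω → ℝ)
    (hmeas : ∀ i, Measurable (g i))
    (hindep : iIndepFun g P)
    (hgauss : ∀ i, Measure.map (g i) P = gaussianReal 0 1)
    (t : ℝ) (ht : 0 < t) :
    P {ω | t ≤ |(∑ i, (g i ω) ^ 2) / (N : ℝ) - 1|}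
      ≤ ENNReal.ofReal (2 * Real.exp (-(t ^ 2 * (N : ℝ)) / (4 * (1 + t)))) :=
  chi_squared_concentration_general P N hN g hindep hgauss t ht
end

section
/- Let ε be a standard Gaussian random variable and ζ ~ N(0, I_{n}) independent of ε. Let t(u) = a‖u‖/2 + σ²·log(p/s − 1)/(a‖u‖) for u ∈ ℝⁿ, where a, σ > 0 and s < p/2. Then (p − s)·P(σε ≥ t(ζ)) ≤ √(s(p−s))·exp(−(n/2)·log(1 + a²/(4σ²))). -/
open MeasureTheory ProbabilityTheory Real
open scoped NNReal

/-!
Conditionally on `ζ = u` with `r = ‖u‖ > 0`, the Gaussian tail bound gives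
`P(σε ≥ t) ≤ exp (-t² / 2σ²)`, and since the cross term of `t² = (ar/2 + σ²L/(ar))²` is exactly
`σ²L` (with `L = log (p/s - 1)`), `t² ≥ a²r²/4 + σ²L`. Hence the conditional probability is at most
`exp (-L/2) · exp (-a²r²/8σ²)`. Averaging over `ζ` with `E exp (-c‖ζ‖²) = (1 + 2c)^(-n/2)` and
using `(p - s) exp (-L/2) = √(s(p - s))` gives the bound.
-/

lemma gaussianReal_real_setOf_le_le (v : ℝ≥0) {c : ℝ} (hc : 0 ≤ c) :
    (gaussianReal 0 v).real {x | c ≤ x} ≤ exp (-c ^ 2 / (2 * v)) := by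
  rcases eq_or_ne v 0 with rfl | hv
  · simp
  have hv' : (0 : ℝ) < v := by positivity
  -- Chernoff bound at the optimal parameter `c / v`
  calc (gaussianReal 0 v).real {x | c ≤ x}
      ≤ exp (-(c / v) * c) * mgf id (gaussianReal 0 v) (c / v) :=
        measure_ge_le_exp_mul_mgf c (by positivity) (integrable_exp_mul_gaussianReal _)
    _ = exp (-c ^ 2 / (2 * v)) := by
        rw [mgf_id_gaussianReal, ← exp_add]
        congr 1
        field_simp
        ring

lemma integral_exp_neg_mul_sq_gaussianReal {c : ℝ} (hc : 0 < 1 + 2 * c) :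
    ∫ x, exp (-c * x ^ 2) ∂gaussianReal 0 1 = (1 + 2 * c) ^ (-(1 / 2) : ℝ) := by
  rw [integral_gaussianReal_eq_integral_smul one_ne_zero]
  simp only [gaussianPDFReal, NNReal.coe_one, mul_one, sub_zero, smul_eq_mul]
  calc ∫ x, (√(2 * π))⁻¹ * exp (-x ^ 2 / 2) * exp (-c * x ^ 2)
      = (√(2 * π))⁻¹ * ∫ x, exp (-(c + 1 / 2) * x ^ 2) := by
        rw [← integral_const_mul]
        congr 1 with x
        rw [mul_assoc, ← exp_add]
        ring_nf
    _ = (1 + 2 * c) ^ (-(1 / 2) : ℝ) := by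
        rw [integral_gaussian, rpow_neg hc.le, ← sqrt_eq_rpow, sqrt_div pi_pos.le,
          show 1 + 2 * c = 2 * (c + 1 / 2) by ring, sqrt_mul zero_le_two, sqrt_mul zero_le_two]
        field_simp

lemma integral_exp_neg_mul_sum_sq_pi_gaussianReal {ι : Type*} [Fintype ι] {c : ℝ}
    (hc : 0 < 1 + 2 * c) :
    ∫ u : ι → ℝ, exp (-c * ∑ i, u i ^ 2) ∂(Measure.pi fun _ => gaussianReal 0 1)
      = (1 + 2 * c) ^ (-(Fintype.card ι / 2) : ℝ) := by
  simp_rw [Finset.mul_sum, exp_sum]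
  rw [integral_fintype_prod_eq_pow (fun x => exp (-c * x ^ 2)),
    integral_exp_neg_mul_sq_gaussianReal hc, ← rpow_mul_natCast hc.le]
  ring_nf

lemma integrable_exp_neg_mul_sum_sq_pi_gaussianReal {ι : Type*} [Fintype ι] {c : ℝ}
    (hc : 0 < 1 + 2 * c) :
    Integrable (fun u : ι → ℝ => exp (-c * ∑ i, u i ^ 2))
      (Measure.pi fun _ => gaussianReal 0 1) := by
  simp_rw [Finset.mul_sum, exp_sum]
  -- the Bochner integral of a non-integrable function would be `0`
  refine Integrable.fintype_prod (f := fun _ x => exp (-c * x ^ 2)) fun _ => ?_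
  exact .of_integral_ne_zero (by rw [integral_exp_neg_mul_sq_gaussianReal hc]; positivity)

lemma ae_pi_sum_sq_pos {ι : Type*} [Fintype ι] [Nonempty ι] (ν : Measure ℝ) [SigmaFinite ν]
    [NullSingletonClass ν] :
    ∀ᵐ u ∂(Measure.pi fun _ : ι => ν), 0 < ∑ i, u i ^ 2 := by
  obtain ⟨i⟩ := ‹Nonempty ι›
  filter_upwards [Measure.ae_eval_ne _ i 0] with u hu
  exact lt_of_lt_of_le (by positivity)
    (Finset.single_le_sum (fun j _ => sq_nonneg (u j)) (Finset.mem_univ i))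

lemma sq_div_four_add_le_sq_half_add_div {A : ℝ} (hA : A ≠ 0) (B : ℝ) :
    A ^ 2 / 4 + B ≤ (A / 2 + B / A) ^ 2 := by
  have hexpand : (A / 2 + B / A) ^ 2 = A ^ 2 / 4 + B + (B / A) ^ 2 := by field_simp; ring
  rw [hexpand]
  linarith [sq_nonneg (B / A)]

lemma sub_mul_exp_neg_log_div_sub_one_div_two {s p : ℝ} (hs : 0 < s) (hsp : s < p) :
    (p - s) * exp (-log (p / s - 1) / 2) = √(s * (p - s)) := by
  have hps : 0 < p - s := by linarith
  have hexp : exp (log ((p - s) / s) / 2) = √((p - s) / s) := by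
    rw [sqrt_eq_rpow, rpow_def_of_pos (by positivity)]
    ring_nf
  rw [show p / s - 1 = (p - s) / s by field_simp, neg_div, exp_neg, hexp, sqrt_div hps.le,
    sqrt_mul hs.le]
  field_simp
  rw [sq_sqrt hps.le]

/-- The threshold `t(u)` of the statement, as a function of `r = ‖u‖` and `L = log (p/s - 1)`. -/
noncomputable def tailThreshold (a σ L r : ℝ) : ℝ := a * r / 2 + σ ^ 2 * L / (a * r)

lemma gaussianReal_real_setOf_tailThreshold_le {a σ L r : ℝ} (ha : 0 < a) (hσ : 0 < σ)
    (hL : 0 ≤ L) (hr : 0 < r) :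
    (gaussianReal 0 1).real {x | tailThreshold a σ L r ≤ σ * x}
      ≤ exp (-L / 2) * exp (-(a ^ 2 / (8 * σ ^ 2)) * r ^ 2) := by
  set t := tailThreshold a σ L r
  have ht : 0 ≤ t / σ := by unfold t tailThreshold; positivity
  have hset : {x | t ≤ σ * x} = {x | t / σ ≤ x} := by
    ext x
    simp only [Set.mem_ofPred_eq, div_le_iff₀ hσ, mul_comm σ]
  have hsq : (a * r) ^ 2 / 4 + σ ^ 2 * L ≤ t ^ 2 :=
    sq_div_four_add_le_sq_half_add_div (by positivity) _
  rw [hset, ← exp_add]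
  refine (gaussianReal_real_setOf_le_le 1 ht).trans (exp_le_exp.mpr ?_)
  calc -(t / σ) ^ 2 / (2 * ((1 : ℝ≥0) : ℝ)) = -t ^ 2 / (2 * σ ^ 2) := by
        simp only [NNReal.coe_one]; field_simp
    _ ≤ -((a * r) ^ 2 / 4 + σ ^ 2 * L) / (2 * σ ^ 2) := by gcongr
    _ = -L / 2 + -(a ^ 2 / (8 * σ ^ 2)) * r ^ 2 := by field_simp; ring

lemma pi_prod_gaussianReal_setOf_tailThreshold_le {ι : Type*} [Fintype ι] [Nonempty ι]
    {a σ L : ℝ} (ha : 0 < a) (hσ : 0 < σ) (hL : 0 ≤ L) :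
    ((Measure.pi fun _ : ι => gaussianReal 0 1).prod (gaussianReal 0 1))
        {q | tailThreshold a σ L √(∑ i, q.1 i ^ 2) ≤ σ * q.2}
      ≤ ENNReal.ofReal
          (exp (-L / 2) * (1 + a ^ 2 / (4 * σ ^ 2)) ^ (-(Fintype.card ι / 2) : ℝ)) := by
  set c := a ^ 2 / (8 * σ ^ 2)
  have hc : 0 < 1 + 2 * c := by positivity
  have := nullSingletonClass_gaussianReal (μ := 0) one_ne_zero
  have hS : MeasurableSet
      {q : (ι → ℝ) × ℝ | tailThreshold a σ L √(∑ i, q.1 i ^ 2) ≤ σ * q.2} := by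
    unfold tailThreshold
    exact measurableSet_le (by fun_prop) (by fun_prop)
  rw [Measure.prod_apply hS]
  calc ∫⁻ u, gaussianReal 0 1 (Prod.mk u ⁻¹' _) ∂(Measure.pi fun _ => gaussianReal 0 1)
      ≤ ∫⁻ u, ENNReal.ofReal (exp (-L / 2) * exp (-c * ∑ i, u i ^ 2))
          ∂(Measure.pi fun _ => gaussianReal 0 1) := by
        refine lintegral_mono_ae ?_
        filter_upwards [ae_pi_sum_sq_pos (gaussianReal 0 1)] with u hu
        rw [← ofReal_measureReal]
        refine ENNReal.ofReal_le_ofReal ?_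
        simpa [sq_sqrt hu.le] using
          gaussianReal_real_setOf_tailThreshold_le ha hσ hL (sqrt_pos.mpr hu)
    _ = ENNReal.ofReal (∫ u, exp (-L / 2) * exp (-c * ∑ i, u i ^ 2)
          ∂(Measure.pi fun _ => gaussianReal 0 1)) :=
        (ofReal_integral_eq_lintegral_ofReal
          ((integrable_exp_neg_mul_sum_sq_pi_gaussianReal hc).const_mul _)
          (ae_of_all _ fun _ => by positivity)).symm
    _ = _ := by
        rw [integral_const_mul, integral_exp_neg_mul_sum_sq_pi_gaussianReal hc]
        congr 3
        ring

/-- Bound on the first term `(p−s)·P(σε ≥ t(ζ))` of `ψ`, where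
`t(u) = a‖u‖/2 + σ²log(p/s−1)/(a‖u‖)`, `ε` standard Gaussian and `ζ` an
independent standard Gaussian vector in `ℝⁿ`. -/
theorem psi_first_term_bound
    {Ω : Type*} [MeasurableSpace Ω] (P : Measure Ω) [IsProbabilityMeasure P]
    (n : ℕ) (hn : 0 < n) (ε : Ω → ℝ) (ζ : Ω → Fin n → ℝ)
    (hεm : Measurable ε) (hζm : Measurable ζ)
    (hε : Measure.map ε P = gaussianReal 0 1)
    (hζ : Measure.map ζ P = Measure.pi fun _ => gaussianReal 0 1)
    (hindep : IndepFun ε ζ P)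
    (a σ : ℝ) (ha : 0 < a) (hσ : 0 < σ)
    (s p : ℕ) (hs : 0 < s) (hsp : (s : ℝ) < (p : ℝ) / 2) :
    ((p : ℝ) - s) *
        (P {ω | a * Real.sqrt (∑ i, (ζ ω i) ^ 2) / 2
              + σ ^ 2 * Real.log ((p : ℝ) / (s : ℝ) - 1)
                  / (a * Real.sqrt (∑ i, (ζ ω i) ^ 2))
              ≤ σ * ε ω}).toReal
      ≤ Real.sqrt ((s : ℝ) * ((p : ℝ) - s)) *
          Real.exp (-((n : ℝ) / 2) * Real.log (1 + a ^ 2 / (4 * σ ^ 2))) := by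
  have : Nonempty (Fin n) := ⟨⟨0, hn⟩⟩
  have hs' : (0 : ℝ) < s := by exact_mod_cast hs
  have hL : 0 ≤ log ((p : ℝ) / s - 1) :=
    log_nonneg (by rw [le_sub_iff_add_le, le_div_iff₀ hs']; linarith)
  have hlaw : P.map (fun ω => (ζ ω, ε ω))
      = (Measure.pi fun _ : Fin n => gaussianReal 0 1).prod (gaussianReal 0 1) := by
    rw [← hζ, ← hε]
    exact (indepFun_iff_map_prod_eq_prod_map_map hζm.aemeasurable hεm.aemeasurable).mp hindep.symm
  have hprob := (Measure.le_map_apply (hζm.prodMk hεm).aemeasurable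
    {q | tailThreshold a σ (log ((p : ℝ) / s - 1)) √(∑ i, q.1 i ^ 2) ≤ σ * q.2}).trans
      (hlaw ▸ pi_prod_gaussianReal_setOf_tailThreshold_le ha hσ hL)
  rw [Fintype.card_fin] at hprob
  calc ((p : ℝ) - s) * (P _).toReal
      ≤ (p - s) * (exp (-log ((p : ℝ) / s - 1) / 2)
          * (1 + a ^ 2 / (4 * σ ^ 2)) ^ (-(n / 2) : ℝ)) := by
        gcongr
        · linarith
        · exact ENNReal.toReal_le_of_le_ofReal (by positivity) hprob
    _ = _ := by
        rw [← mul_assoc, sub_mul_exp_neg_log_div_sub_one_div_two hs' (by linarith),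
          rpow_def_of_pos (by positivity), mul_comm (log _)]
end
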